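/- Let (E, ≤, ε) be a heap with pieces in P and concurrency relation 𝒞, and suppose the concurrency subgraph of E contains no circuits (i.e. is acyclic). Then the following are equivalent: (i) E is ranked; (ii) every subinterval of E is ranked; (iii) every minimal balanced subinterval of E is ranked. -/

import Mathlib

/-- `ρ` is a rank function for the poset `E`:
it increases by exactly 1 along covering relations. -/
def IsRankFunction {E : Type*} [PartialOrder E] (ρ : E → ℤ) : Prop :=
  ∀ a b : E, a ⋖ b → ρ b = ρ a + 1

/-- A poset is ranked if it admits a rank function. -/
def Ranked (E : Type*) [PartialOrder E] : Prop :=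
  ∃ ρ : E → ℤ, IsRankFunction ρ

/-- Two elements lie in the same connected component of the poset: the
equivalence relation generated by the covering relation. -/
def SameComponent {E : Type*} [PartialOrder E] (a b : E) : Prop :=
  Relation.EqvGen (fun x y : E => x ⋖ y) a b

/-- The heap axioms for a labelling `ε : E → P` of a poset `E` with
concurrency relation `C` on the pieces `P`. -/
def IsHeap {E P : Type*} [PartialOrder E] (C : P → P → Prop) (ε : E → P) : Prop :=
  (∀ α β : E, C (ε α) (ε β) → α ≤ β ∨ β ≤ α) ∧
  (∀ α β : E, α ≤ β ↔ Relation.TransGen (fun x y : E => x ≤ y ∧ C (ε x) (ε y)) α β)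

/-- `[a, b]` is a minimal balanced subinterval: `a ≠ b`, `ε a = ε b`, and the
only elements of `[a, b]` with label `ε a` are `a` and `b`. -/
def MinBalanced {E P : Type*} [PartialOrder E] (ε : E → P) (a b : E) : Prop :=
  a < b ∧ ε a = ε b ∧ ∀ c ∈ Set.Icc a b, ε c = ε a → c = a ∨ c = b

/-- The set `S_{[a,b]}` of elements of `[a, b]` whose label is distinct from,
but concurrent with, the label of `a`. -/
def intervalS {E P : Type*} [PartialOrder E] (C : P → P → Prop) (ε : E → P)
    (a b : E) : Set E :=
  {c | c ∈ Set.Icc a b ∧ ε c ≠ ε a ∧ C (ε a) (ε c)}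

/-- The concurrency subgraph of the heap (the simple graph on the labels
occurring in `E`, with distinct labels adjacent iff concurrent) is acyclic. -/
def NoCircuits {E P : Type*} [PartialOrder E] (C : P → P → Prop) (ε : E → P) : Prop :=
  (SimpleGraph.fromRel (fun v w : Set.range ε => C v.1 w.1)).IsAcyclic

/-!
Only (iii) ⇒ (i) needs an argument. A rank function is built on lower sets, adding a maximal
element `m` at a time; this works once all lower covers of `m` have the same rank.
Each lower cover of `m` is concurrent with `m`. If some element below `m` carries the label of
`m`, let `a` be a highest one: `[a, m]` is a minimal balanced interval containing every lower
cover of `m`, and its rank function levels them. Otherwise no other element carries the label of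
`m`, and distinct lower covers `y`, `z` of `m` lie in distinct components of the Hasse diagram of
the rest: a path from `y` to `z` would project to a walk from `ε y` to `ε z` avoiding `ε m`,
which with the edges to `ε m` closes a circuit. So the rank function can be shifted by a constant
on each component.
-/

open Set

namespace SimpleGraph

variable {V : Type*} {G : SimpleGraph V}

lemma IsAcyclic.not_reachable_deleteIncidenceSet (hG : G.IsAcyclic) {u v w : V}
    (hu : G.Adj u v) (hw : G.Adj w v) (huw : u ≠ w) :
    ¬ (G.deleteIncidenceSet v).Reachable u w := by
  intro hreach
  apply isAcyclic_iff_forall_adj_isBridge.1 hG hu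
  have hle : G.deleteIncidenceSet v ≤ G.deleteEdges {s(u, v)} := fun a b hab => by
    rw [deleteIncidenceSet_adj] at hab
    rw [deleteEdges_adj, mem_singleton_iff, Sym2.eq_iff]
    exact ⟨hab.1, by rintro (⟨-, h⟩ | ⟨h, -⟩); exacts [hab.2.2 h, hab.2.1 h]⟩
  have hwv : (G.deleteEdges {s(u, v)}).Adj w v := by
    rw [deleteEdges_adj, mem_singleton_iff, Sym2.eq_iff]
    exact ⟨hw, by rintro (⟨h, -⟩ | ⟨h, -⟩); exacts [huw h.symm, hw.ne h]⟩
  exact (hreach.mono hle).trans hwv.reachable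

end SimpleGraph

section RankFunctionOn

variable {E : Type*} [PartialOrder E]

/-- Covering is taken in `E`; on an order-connected `s`, such as an interval or a lower set,
it is covering in `s`. -/
def IsRankFunctionOn (s : Set E) (ρ : E → ℤ) : Prop :=
  ∀ ⦃x⦄, x ∈ s → ∀ ⦃y⦄, y ∈ s → x ⋖ y → ρ y = ρ x + 1

def CovByIn (s : Set E) (x y : E) : Prop :=
  x ∈ s ∧ y ∈ s ∧ x ⋖ y

variable {s t : Set E} {ρ σ : E → ℤ}

lemma IsRankFunction.isRankFunctionOn (hρ : IsRankFunction ρ) (s : Set E) :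
    IsRankFunctionOn s ρ :=
  fun x _ y _ => hρ x y

lemma IsRankFunctionOn.mono (hρ : IsRankFunctionOn s ρ) (hts : t ⊆ s) : IsRankFunctionOn t ρ :=
  fun _ hx _ hy => hρ (hts hx) (hts hy)

lemma ranked_iff_exists_isRankFunctionOn (hs : s.OrdConnected) :
    Ranked s ↔ ∃ ρ : E → ℤ, IsRankFunctionOn s ρ := by
  have hcov : ∀ x y : s, x ⋖ y ↔ (x : E) ⋖ y := fun x y =>
    (OrdConnected.apply_covBy_apply_iff (OrderEmbedding.subtype (· ∈ s)) (by simpa using hs)).symm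
  constructor
  · rintro ⟨ρ₀, hρ₀⟩
    classical
    refine ⟨fun x => if hx : x ∈ s then ρ₀ ⟨x, hx⟩ else 0, fun x hx y hy hxy => ?_⟩
    simp only [dif_pos hx, dif_pos hy]
    exact hρ₀ _ _ ((hcov ⟨x, hx⟩ ⟨y, hy⟩).2 hxy)
  · rintro ⟨ρ, hρ⟩
    exact ⟨fun x => ρ x, fun x y hxy => hρ x.2 y.2 ((hcov x y).1 hxy)⟩

lemma IsRankFunctionOn.sub_eq_sub [LocallyFiniteOrder E] {a b : E}
    (hρ : IsRankFunctionOn (Icc a b) ρ) (hσ : IsRankFunctionOn (Icc a b) σ) (hab : a ≤ b) :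
    ρ b - σ b = ρ a - σ a := by
  suffices ∀ c, Relation.ReflTransGen (· ⋖ ·) a c → c ≤ b → ρ c - σ c = ρ a - σ a from
    this b (le_iff_reflTransGen_covBy.1 hab) le_rfl
  intro c hac
  induction hac with
  | refl => exact fun _ => rfl
  | @tail c d hac hcd ih =>
    intro hdb
    have hac := le_iff_reflTransGen_covBy.2 hac
    have hc : c ∈ Icc a b := ⟨hac, hcd.le.trans hdb⟩
    have hd : d ∈ Icc a b := ⟨hac.trans hcd.le, hdb⟩
    have hac' := ih hc.2
    rw [hρ hc hd hcd, hσ hc hd hcd]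
    omega

/-- Shift `ρ` by a constant on each component of the Hasse diagram of `s`. -/
lemma IsRankFunctionOn.exists_eqOn {Y : Set E} (hρ : IsRankFunctionOn s ρ) (g : E → ℤ)
    (hY : ∀ y ∈ Y, ∀ z ∈ Y, Relation.EqvGen (CovByIn s) y z → y = z) :
    ∃ ρ' : E → ℤ, IsRankFunctionOn s ρ' ∧ EqOn ρ' g Y := by
  have hinj : Function.Injective fun y : Y => Quot.mk (CovByIn s) y.1 := fun y z hyz =>
    Subtype.ext (hY y y.2 z z.2 (Quot.eqvGen_exact hyz))
  set shift := Function.extend (fun y : Y => Quot.mk (CovByIn s) y.1) (fun y => g y - ρ y) 0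
  refine ⟨fun x => ρ x + shift (Quot.mk _ x), fun x hx y hy hxy => ?_, fun y hy => ?_⟩
  · dsimp only
    rw [hρ hx hy hxy, ← Quot.sound ⟨hx, hy, hxy⟩]
    ring
  · simp only [shift, hinj.extend_apply _ _ ⟨y, hy⟩]
    ring

lemma IsRankFunctionOn.insert_update [DecidableEq E] {m : E} {r : ℤ} (hρ : IsRankFunctionOn s ρ)
    (hm : m ∉ s) (hmax : ∀ x ∈ s, ¬ m < x) (hr : ∀ y ∈ s, y ⋖ m → ρ y + 1 = r) :
    IsRankFunctionOn (insert m s) (Function.update ρ m r) := by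
  rintro x (rfl | hx) y (rfl | hy) hxy
  · exact absurd hxy.lt (lt_irrefl _)
  · exact absurd hxy.lt (hmax y hy)
  · rw [Function.update_self, Function.update_of_ne (ne_of_mem_of_not_mem hx hm), hr x hx hxy]
  · rw [Function.update_of_ne (ne_of_mem_of_not_mem hx hm),
      Function.update_of_ne (ne_of_mem_of_not_mem hy hm), hρ hx hy hxy]

end RankFunctionOn

/-- `NoCircuits C ε` is by definition `(concurrencyGraph C ε).IsAcyclic`. -/
def concurrencyGraph {E P : Type*} (C : P → P → Prop) (ε : E → P) :
    SimpleGraph (range ε) :=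
  SimpleGraph.fromRel fun v w : range ε => C v.1 w.1

namespace IsHeap

variable {E P : Type*} [PartialOrder E] {C : P → P → Prop} {ε : E → P}

lemma exists_concurrent_of_lt (h : IsHeap C ε) {x y : E} (hxy : x < y) :
    ∃ z, x ≤ z ∧ z < y ∧ C (ε z) (ε y) := by
  induction (h.2 x y).1 hxy.le with
  | single hxy' => exact ⟨x, le_rfl, hxy, hxy'.2⟩
  | @tail b c hxb hbc ih =>
    by_cases hb : b = c
    · subst hb
      exact ih hxy
    · exact ⟨b, (h.2 x b).2 hxb, lt_of_le_of_ne hbc.1 hb, hbc.2⟩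

lemma concurrent_of_covBy (h : IsHeap C ε) {x y : E} (hxy : x ⋖ y) : C (ε x) (ε y) := by
  obtain ⟨z, hxz, hzy, hC⟩ := h.exists_concurrent_of_lt hxy.lt
  obtain rfl : x = z := eq_of_le_of_not_lt hxz fun hlt => hxy.2 hlt hzy
  exact hC

lemma le_total_of_eq (h : IsHeap C ε) (hrefl : ∀ p, C p p) {x y : E} (hxy : ε x = ε y) :
    x ≤ y ∨ y ≤ x :=
  h.1 x y (hxy ▸ hrefl _)

lemma reachable_of_eqvGen (h : IsHeap C ε) {s : Set E} {v : range ε}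
    (hs : ∀ x ∈ s, rangeFactorization ε x ≠ v) {x y : E} (hxy : Relation.EqvGen (CovByIn s) x y) :
    ((concurrencyGraph C ε).deleteIncidenceSet v).Reachable
      (rangeFactorization ε x) (rangeFactorization ε y) := by
  induction hxy with
  | rel a b hab =>
    by_cases hlab : rangeFactorization ε a = rangeFactorization ε b
    · rw [hlab]
    · refine SimpleGraph.Adj.reachable ?_
      rw [SimpleGraph.deleteIncidenceSet_adj, concurrencyGraph, SimpleGraph.fromRel_adj]
      exact ⟨⟨hlab, .inl (h.concurrent_of_covBy hab.2.2)⟩, hs a hab.1, hs b hab.2.1⟩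
  | refl => rfl
  | symm _ _ _ ih => exact ih.symm
  | trans _ _ _ _ _ ih₁ ih₂ => exact ih₁.trans ih₂

lemma eq_of_eqvGen_of_covBy (h : IsHeap C ε) (hrefl : ∀ p, C p p)
    (hacyclic : NoCircuits C ε) {s : Set E} {m y z : E} (hs : ∀ x ∈ s, ε x ≠ ε m)
    (hy : y ∈ s) (hz : z ∈ s) (hym : y ⋖ m) (hzm : z ⋖ m)
    (hyz : Relation.EqvGen (CovByIn s) y z) : y = z := by
  by_contra hne
  have hlab : ε y ≠ ε z := fun heq => (h.le_total_of_eq hrefl heq).elim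
    (fun hle => hym.2 (hle.lt_of_ne hne) hzm.lt)
    (fun hle => hzm.2 (hle.lt_of_ne (Ne.symm hne)) hym.lt)
  have hadj : ∀ x ∈ s, x ⋖ m →
      (concurrencyGraph C ε).Adj (rangeFactorization ε x) (rangeFactorization ε m) :=
    fun x hx hxm => (SimpleGraph.fromRel_adj _ _ _).2
      ⟨fun heq => hs x hx (congrArg Subtype.val heq), .inl (h.concurrent_of_covBy hxm)⟩
  refine SimpleGraph.IsAcyclic.not_reachable_deleteIncidenceSet hacyclic
    (hadj y hy hym) (hadj z hz hzm) (fun heq => hlab (congrArg Subtype.val heq)) ?_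
  exact h.reachable_of_eqvGen (v := rangeFactorization ε m)
    (fun x hx heq => hs x hx (congrArg Subtype.val heq)) hyz

lemma minBalanced_of_maximal {a m : E} (ha : Maximal (fun x => x < m ∧ ε x = ε m) a) :
    MinBalanced ε a m := by
  refine ⟨ha.1.1, ha.1.2, fun c hc hca => (hc.2.lt_or_eq).imp (fun hcm => ?_) id⟩
  exact ha.eq_of_ge ⟨hcm, hca.trans ha.1.2⟩ hc.1

lemma add_one_eq_of_covBy [LocallyFiniteOrder E] (h : IsHeap C ε) {s : Set E} {ρ σ : E → ℤ}
    {a m y : E} (ham : a < m) (hlab : ε a = ε m) (hs : Iio m ⊆ s)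
    (hρ : IsRankFunctionOn s ρ) (hσ : IsRankFunctionOn (Icc a m) σ) (hym : y ⋖ m) :
    ρ y + 1 = ρ a + (σ m - σ a) := by
  have hay : a ≤ y := (h.1 y a (hlab ▸ h.concurrent_of_covBy hym)).elim
    (fun hya => (eq_of_le_of_not_lt hya fun hlt => hym.2 hlt ham).ge) id
  have hdiff := (hρ.mono fun x hx => hs (hx.2.trans_lt hym.lt)).sub_eq_sub
    (hσ.mono (Icc_subset_Icc_right hym.le)) hay
  have hstep := hσ ⟨hay, hym.le⟩ ⟨ham.le, le_rfl⟩ hym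
  omega

lemma exists_isRankFunctionOn_eq_zero_of_covBy (h : IsHeap C ε) (hrefl : ∀ p, C p p)
    (hacyclic : NoCircuits C ε) {s : Set E} {m : E} {ρ : E → ℤ} (hρ : IsRankFunctionOn s ρ)
    (hs : ∀ x ∈ s, ε x ≠ ε m) (hcov : ∀ y, y ⋖ m → y ∈ s) :
    ∃ ρ' : E → ℤ, IsRankFunctionOn s ρ' ∧ ∀ y, y ⋖ m → ρ' y = 0 :=
  let ⟨ρ', hρ', heq⟩ := hρ.exists_eqOn (Y := {y | y ⋖ m}) 0 fun y hy z hz hyz =>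
    h.eq_of_eqvGen_of_covBy hrefl hacyclic hs (hcov y hy) (hcov z hz) hy hz hyz
  ⟨ρ', hρ', fun _ hy => heq hy⟩

lemma exists_isRankFunctionOn_of_maximal [Finite E] (h : IsHeap C ε) (hrefl : ∀ p, C p p)
    (hacyclic : NoCircuits C ε)
    (hmin : ∀ a b, MinBalanced ε a b → ∃ σ : E → ℤ, IsRankFunctionOn (Icc a b) σ)
    {t : Set E} (ht : IsLowerSet t) {m : E} (hm : Maximal (· ∈ t) m) {ρ : E → ℤ}
    (hρ : IsRankFunctionOn (t \ {m}) ρ) : ∃ ρ' : E → ℤ, IsRankFunctionOn t ρ' := by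
  classical
  have hmax : ∀ x ∈ t \ {m}, ¬ m < x := fun x hx hlt => hlt.ne' (hm.eq_of_ge hx.1 hlt.le)
  have hbelow : Iio m ⊆ t \ {m} := fun x hx => ⟨ht (le_of_lt hx) hm.1, ne_of_lt hx⟩
  suffices ∃ (ρ' : E → ℤ) (r : ℤ), IsRankFunctionOn (t \ {m}) ρ' ∧ ∀ y, y ⋖ m → ρ' y + 1 = r by
    obtain ⟨ρ', r, hρ', hr⟩ := this
    have hext := hρ'.insert_update (fun hm' => hm'.2 rfl) hmax fun y _ hy => hr y hy
    rw [insert_sdiff_singleton, insert_eq_of_mem hm.1] at hext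
    exact ⟨_, hext⟩
  by_cases hlabel : ∃ x < m, ε x = ε m
  · obtain ⟨a, ha⟩ := (toFinite {x | x < m ∧ ε x = ε m}).exists_maximal hlabel
    obtain ⟨σ, hσ⟩ := hmin a m (minBalanced_of_maximal ha)
    let : LocallyFiniteOrder E := have := Fintype.ofFinite E; Fintype.toLocallyFiniteOrder
    exact ⟨ρ, _, hρ, fun y hy => h.add_one_eq_of_covBy ha.1.1 ha.1.2 hbelow hρ hσ hy⟩
  · push Not at hlabel
    have hs : ∀ x ∈ t \ {m}, ε x ≠ ε m := fun x hx heq =>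
      (h.le_total_of_eq hrefl heq).elim (fun hle => hlabel x (hle.lt_of_ne hx.2) heq)
        (fun hle => hmax x hx (hle.lt_of_ne (Ne.symm hx.2)))
    obtain ⟨ρ', hρ', hzero⟩ :=
      h.exists_isRankFunctionOn_eq_zero_of_covBy hrefl hacyclic hρ hs fun y hy => hbelow hy.lt
    exact ⟨ρ', 1, hρ', fun y hy => by rw [hzero y hy, zero_add]⟩

theorem ranked_of_minBalanced [Finite E] (h : IsHeap C ε) (hrefl : ∀ p, C p p)
    (hacyclic : NoCircuits C ε)
    (hmin : ∀ a b, MinBalanced ε a b → ∃ σ : E → ℤ, IsRankFunctionOn (Icc a b) σ) :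
    Ranked E := by
  suffices ∀ t : Set E, IsLowerSet t → ∃ ρ : E → ℤ, IsRankFunctionOn t ρ by
    obtain ⟨ρ, hρ⟩ := this univ isLowerSet_univ
    exact ⟨ρ, fun x y => hρ (mem_univ x) (mem_univ y)⟩
  intro t
  induction t using WellFoundedLT.induction with
  | _ t ih =>
    intro ht
    rcases t.eq_empty_or_nonempty with rfl | hne
    · exact ⟨0, fun x hx => hx.elim⟩
    obtain ⟨m, hm⟩ := t.toFinite.exists_maximal hne
    have hlower : IsLowerSet (t \ {m}) := fun x y hyx hx =>
      ⟨ht hyx hx.1, fun hym => hx.2 (hm.eq_of_ge hx.1 (hym ▸ hyx))⟩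
    obtain ⟨ρ, hρ⟩ := ih _ (sdiff_singleton_ssubset.2 hm.1) hlower
    exact h.exists_isRankFunctionOn_of_maximal hrefl hacyclic hmin ht hm hρ

end IsHeap

theorem ranked_tfae_of_noCircuits_general {E P : Type*} [PartialOrder E] [Finite E]
    (C : P → P → Prop) (hrefl : Reflexive C)
    (ε : E → P) (hheap : IsHeap C ε) (hacyclic : NoCircuits C ε) :
    List.TFAE [Ranked E,
      ∀ a b : E, a ≤ b → Ranked (Set.Icc a b),
      ∀ a b : E, MinBalanced ε a b → Ranked (Set.Icc a b)] := by
  tfae_have 1 → 2 := fun ⟨ρ, hρ⟩ _ _ _ =>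
    (ranked_iff_exists_isRankFunctionOn ordConnected_Icc).2 ⟨ρ, hρ.isRankFunctionOn _⟩
  tfae_have 2 → 3 := fun h a b hab => h a b hab.1.le
  tfae_have 3 → 1 := fun h => hheap.ranked_of_minBalanced hrefl hacyclic fun a b hab =>
    (ranked_iff_exists_isRankFunctionOn ordConnected_Icc).1 (h a b hab)
  tfae_finish

/-- Theorem 2.1.1: for a heap whose concurrency subgraph contains no circuits,
the following are equivalent: (i) E is ranked; (ii) every subinterval of E is
ranked; (iii) every minimal balanced subinterval of E is ranked. -/
theorem ranked_tfae_of_noCircuits {E P : Type*} [PartialOrder E] [Finite E]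
    (C : P → P → Prop) (hrefl : Reflexive C) (hsymm : Symmetric C)
    (ε : E → P) (hheap : IsHeap C ε) (hacyclic : NoCircuits C ε) :
    List.TFAE [Ranked E,
      ∀ a b : E, a ≤ b → Ranked (Set.Icc a b),
      ∀ a b : E, MinBalanced ε a b → Ranked (Set.Icc a b)] :=
  ranked_tfae_of_noCircuits_general C hrefl ε hheap hacyclic
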